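/- For the substitution μ : a ↦ ccd, b ↦ cd, c ↦ ab, d ↦ a, the letter a never occurs in μ^{2n+1}(a) and the letter c never occurs in μ^{2n}(a), for all n ≥ 0; in particular μ is not primitive. -/

import Mathlib

/-! `μ` maps the letters `{a, b}` into words over `{c, d}` and vice versa, so the images
of `a` alternate between the two alphabets; since no power of `μ` sends `a` to a word
containing both `a` and `c`, `μ` is not primitive. -/

/-- `substApp μ n w` is `μ^n(w)`: the `n`-fold application of the substitution `μ`
(extended to words by concatenation) to the word `w`. -/
def substApp {A : Type*} (μ : A → List A) (n : ℕ) (w : List A) : List A :=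
  (fun v => v.flatMap μ)^[n] w

/-- The substitution `μ : a ↦ ccd, b ↦ cd, c ↦ ab, d ↦ a` on `{a,b,c,d} = Fin 4`. -/
def mu10 : Fin 4 → List (Fin 4) := ![[2, 2, 3], [2, 3], [0, 1], [0]]

section Alternating

variable {A : Type*} {μ : A → List A} {S T : Set A}

theorem substApp_succ (μ : A → List A) (n : ℕ) (w : List A) :
    substApp μ (n + 1) w = (substApp μ n w).flatMap μ :=
  Function.iterate_succ_apply' _ n w

theorem forall_mem_flatMap_of_mapsTo (hST : ∀ x ∈ S, ∀ y ∈ μ x, y ∈ T) {w : List A}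
    (hw : ∀ x ∈ w, x ∈ S) : ∀ y ∈ w.flatMap μ, y ∈ T := by
  simp only [List.mem_flatMap]
  rintro y ⟨x, hx, hy⟩
  exact hST x (hw x hx) y hy

theorem forall_mem_substApp_even (hST : ∀ x ∈ S, ∀ y ∈ μ x, y ∈ T)
    (hTS : ∀ x ∈ T, ∀ y ∈ μ x, y ∈ S) (n : ℕ) {w : List A} (hw : ∀ x ∈ w, x ∈ S) :
    ∀ y ∈ substApp μ (2 * n) w, y ∈ S := by
  induction n with
  | zero => exact hw
  | succ n ih =>
    rw [Nat.mul_succ, substApp_succ, substApp_succ]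
    exact forall_mem_flatMap_of_mapsTo hTS (forall_mem_flatMap_of_mapsTo hST ih)

theorem forall_mem_substApp_odd (hST : ∀ x ∈ S, ∀ y ∈ μ x, y ∈ T)
    (hTS : ∀ x ∈ T, ∀ y ∈ μ x, y ∈ S) (n : ℕ) {w : List A} (hw : ∀ x ∈ w, x ∈ S) :
    ∀ y ∈ substApp μ (2 * n + 1) w, y ∈ T := by
  rw [substApp_succ]
  exact forall_mem_flatMap_of_mapsTo hST (forall_mem_substApp_even hST hTS n hw)

theorem not_primitive_of_mapsTo_swap (hST : ∀ x ∈ S, ∀ y ∈ μ x, y ∈ T)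
    (hTS : ∀ x ∈ T, ∀ y ∈ μ x, y ∈ S) (hdisj : Disjoint S T) {s t : A} (hs : s ∈ S)
    (ht : t ∈ T) : ¬ ∃ k : ℕ, ∀ a b : A, a ∈ substApp μ k [b] := by
  rintro ⟨k, hk⟩
  have hw : ∀ x ∈ [s], x ∈ S := by simpa using hs
  obtain ⟨n, rfl | rfl⟩ := Nat.even_or_odd' k
  · exact Set.disjoint_right.mp hdisj ht (forall_mem_substApp_even hST hTS n hw t (hk t s))
  · exact Set.disjoint_left.mp hdisj hs (forall_mem_substApp_odd hST hTS n hw s (hk s s))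

end Alternating

theorem mu10_mapsTo_low :
    ∀ x ∈ ({0, 1} : Set (Fin 4)), ∀ y ∈ mu10 x, y ∈ ({2, 3} : Set (Fin 4)) := by
  rintro x (rfl | rfl) <;> simp [mu10]

theorem mu10_mapsTo_high :
    ∀ x ∈ ({2, 3} : Set (Fin 4)), ∀ y ∈ mu10 x, y ∈ ({0, 1} : Set (Fin 4)) := by
  rintro x (rfl | rfl) <;> simp [mu10]

/-- For `μ : a ↦ ccd, b ↦ cd, c ↦ ab, d ↦ a`, the letter `a` never occurs in
`μ^{2n+1}(a)` and the letter `c` never occurs in `μ^{2n}(a)`; in particular `μ`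
is not primitive. -/
theorem stmt10 :
    (∀ n : ℕ, (0 : Fin 4) ∉ substApp mu10 (2 * n + 1) [0]) ∧
    (∀ n : ℕ, (2 : Fin 4) ∉ substApp mu10 (2 * n) [0]) ∧
    ¬ ∃ k : ℕ, ∀ a b : Fin 4, a ∈ substApp mu10 k [b] := by
  have ha : ∀ x ∈ [(0 : Fin 4)], x ∈ ({0, 1} : Set (Fin 4)) := by simp
  refine ⟨fun n h => ?_, fun n h => ?_, ?_⟩
  · simpa using forall_mem_substApp_odd mu10_mapsTo_low mu10_mapsTo_high n ha 0 h
  · simpa using forall_mem_substApp_even mu10_mapsTo_low mu10_mapsTo_high n ha 2 h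
  · exact not_primitive_of_mapsTo_swap mu10_mapsTo_low mu10_mapsTo_high
      (by simp [Set.disjoint_left]) (s := 0) (t := 2) (by simp) (by simp)
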